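/- arXiv:2001.09444 — 3 statements merged into one kernel-verified Lean document; each statement's English description precedes it below -/
import Mathlib

section
/- Let H be a Hilbert space with orthonormal basis (φ_n), let (λ_n) be a sequence of reals with λ_n ≥ λ_1 > 0, let 0 < α < 1, 0 ≤ γ ≤ 1, and suppose |E_{α,α}(-η)| ≤ C/(1+η) for all η ≥ 0. Define K(t)a = Σ_n t^{α-1} E_{α,α}(-λ_n t^α) ⟨a, φ_n⟩ φ_n and A_0^γ v = Σ_n λ_n^γ ⟨v,φ_n⟩ φ_n. Then there is a constant C(γ) with ‖A_0^γ K(t) a‖ ≤ C(γ) t^{α(1-γ)-1} ‖a‖ for all t > 0 and a ∈ H. -/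
open Real

/-- The two-parameter Mittag-Leffler function `E_{α,β}` on the reals. -/
noncomputable def mittagLeffler2 (α β : ℝ) (x : ℝ) : ℝ :=
  ∑' k : ℕ, x ^ k / Real.Gamma (α * k + β)

/-- Smoothing estimate ‖A₀^γ K(t) a‖ ≤ C(γ) t^{α(1-γ)-1} ‖a‖ for the kernel
K(t)a = Σ_n t^{α-1} E_{α,α}(-λ_n t^α) ⟨a,φ_n⟩ φ_n, stated spectrally through the
orthonormal basis (φ_n). -/
theorem fractional_power_kernel_estimate
    {H : Type*} [NormedAddCommGroup H] [InnerProductSpace ℝ H] [CompleteSpace H]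
    (φ : HilbertBasis ℕ ℝ H) (lam : ℕ → ℝ)
    (hlam0 : 0 < lam 0) (hlam : ∀ n, lam 0 ≤ lam n)
    (α γ C : ℝ) (hα0 : 0 < α) (hα1 : α < 1) (hγ0 : 0 ≤ γ) (hγ1 : γ ≤ 1) (hC : 0 < C)
    (hE : ∀ η : ℝ, 0 ≤ η → |mittagLeffler2 α α (-η)| ≤ C / (1 + η)) :
    ∃ Cγ > 0, ∀ t : ℝ, 0 < t → ∀ a g : H,
      HasSum (fun n : ℕ =>
        (lam n ^ γ * (t ^ (α - 1) * mittagLeffler2 α α (-(lam n * t ^ α)))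
          * (inner ℝ a (φ n) : ℝ)) • φ n) g →
      ‖g‖ ≤ Cγ * t ^ (α * (1 - γ) - 1) * ‖a‖ := by
  refine ⟨C, hC, ?_⟩
  intro t ht a g hg
  set c : ℕ → ℝ := fun n =>
    lam n ^ γ * (t ^ (α - 1) * mittagLeffler2 α α (-(lam n * t ^ α)))
      * (inner ℝ a (φ n) : ℝ) with hc
  set K : ℝ := C * t ^ (α * (1 - γ) - 1) with hK
  have hKpos : 0 < K := mul_pos hC (Real.rpow_pos_of_pos ht _)
  -- coefficient bound
  have key : ∀ n, |lam n ^ γ * (t ^ (α - 1) * mittagLeffler2 α α (-(lam n * t ^ α)))| ≤ K := by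
    intro n
    have hL : 0 < lam n := lt_of_lt_of_le hlam0 (hlam n)
    have htα : (0:ℝ) < t ^ α := Real.rpow_pos_of_pos ht α
    have hs : (0:ℝ) ≤ lam n * t ^ α := by positivity
    have hs1 : (0:ℝ) < 1 + lam n * t ^ α := by positivity
    have hLg : (0:ℝ) ≤ lam n ^ γ := Real.rpow_nonneg hL.le γ
    have htα1 : (0:ℝ) ≤ t ^ (α - 1) := (Real.rpow_pos_of_pos ht _).le
    have h1 : |mittagLeffler2 α α (-(lam n * t ^ α))| ≤ C / (1 + lam n * t ^ α) :=
      hE _ hs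
    have hsγ : (lam n * t ^ α) ^ γ ≤ 1 + lam n * t ^ α := by
      rcases le_total (lam n * t ^ α) 1 with h | h
      · have := Real.rpow_le_one hs h hγ0; linarith
      · have := Real.rpow_le_rpow_of_exponent_le h hγ1
        rw [Real.rpow_one] at this; linarith
    have hmul : (lam n * t ^ α) ^ γ = lam n ^ γ * t ^ (α * γ) := by
      rw [Real.mul_rpow hL.le htα.le, ← Real.rpow_mul ht.le]
    rw [hmul] at hsγ
    -- lam n ^ γ ≤ (1 + s) * t ^ (-(α*γ))
    have htneg : (0:ℝ) < t ^ (-(α * γ)) := Real.rpow_pos_of_pos ht _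
    have htprod : t ^ (α * γ) * t ^ (-(α * γ)) = 1 := by
      rw [← Real.rpow_add ht]; simp
    have hLb : lam n ^ γ ≤ (1 + lam n * t ^ α) * t ^ (-(α * γ)) := by
      have := mul_le_mul_of_nonneg_right hsγ htneg.le
      calc lam n ^ γ = lam n ^ γ * (t ^ (α * γ) * t ^ (-(α * γ))) := by rw [htprod]; ring
        _ = lam n ^ γ * t ^ (α * γ) * t ^ (-(α * γ)) := by ring
        _ ≤ (1 + lam n * t ^ α) * t ^ (-(α * γ)) := this
    -- core estimate without inner ℝ product
    have habs : |lam n ^ γ * (t ^ (α - 1) * mittagLeffler2 α α (-(lam n * t ^ α)))|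
        = lam n ^ γ * t ^ (α - 1) * |mittagLeffler2 α α (-(lam n * t ^ α))| := by
      rw [abs_mul, abs_mul, abs_of_nonneg hLg, abs_of_nonneg htα1]; ring
    rw [habs]
    have step1 : lam n ^ γ * |mittagLeffler2 α α (-(lam n * t ^ α))|
        ≤ C * t ^ (-(α * γ)) := by
      calc lam n ^ γ * |mittagLeffler2 α α (-(lam n * t ^ α))|
          ≤ lam n ^ γ * (C / (1 + lam n * t ^ α)) :=
            mul_le_mul_of_nonneg_left h1 hLg
        _ ≤ ((1 + lam n * t ^ α) * t ^ (-(α * γ))) * (C / (1 + lam n * t ^ α)) :=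
            mul_le_mul_of_nonneg_right hLb (by positivity)
        _ = C * t ^ (-(α * γ)) := by field_simp
    have hexp : t ^ (α * (1 - γ) - 1) = t ^ (α - 1) * t ^ (-(α * γ)) := by
      rw [← Real.rpow_add ht]; ring_nf
    calc lam n ^ γ * t ^ (α - 1) * |mittagLeffler2 α α (-(lam n * t ^ α))|
        = t ^ (α - 1) * (lam n ^ γ * |mittagLeffler2 α α (-(lam n * t ^ α))|) := by ring
      _ ≤ t ^ (α - 1) * (C * t ^ (-(α * γ))) := mul_le_mul_of_nonneg_left step1 htα1
      _ = K := by rw [hK, hexp]; ring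
  -- inner ℝ products of g with basis vectors
  have hinner : ∀ m, (inner ℝ g (φ m) : ℝ) = c m := by
    intro m
    have h1 : HasSum (fun n => (inner ℝ (φ m) (c n • φ n) : ℝ)) (inner ℝ (φ m) g : ℝ) :=
      (innerSL ℝ (φ m)).hasSum hg
    have h2 : (fun n => (inner ℝ (φ m) (c n • φ n) : ℝ))
        = fun n => if n = m then c m else 0 := by
      funext n
      rw [real_inner_smul_right, orthonormal_iff_ite.mp φ.orthonormal]
      rcases eq_or_ne n m with rfl | hnm
      · simp
      · simp [hnm, Ne.symm hnm]
    rw [h2] at h1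
    have h3 : HasSum (fun n => if n = m then c m else 0) (c m) := hasSum_ite_eq m (c m)
    rw [real_inner_comm, h1.unique h3]
  -- Parseval for g and a
  have hg2 : HasSum (fun i => c i ^ 2) (inner ℝ g g : ℝ) := by
    have h := φ.hasSum_inner_mul_inner g g
    have heq : (fun i => (inner ℝ g (φ i) : ℝ) * (inner ℝ (φ i) g : ℝ)) = fun i => c i ^ 2 := by
      funext i
      rw [hinner i, real_inner_comm g (φ i), hinner i]; ring
    rwa [heq] at h
  have ha2 : HasSum (fun i => K ^ 2 * (inner ℝ a (φ i) : ℝ) ^ 2) (K ^ 2 * (inner ℝ a a : ℝ)) := by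
    have h := (φ.hasSum_inner_mul_inner a a).mul_left (K ^ 2)
    have heq : (fun i => K ^ 2 * ((inner ℝ a (φ i) : ℝ) * (inner ℝ (φ i) a : ℝ)))
        = fun i => K ^ 2 * (inner ℝ a (φ i) : ℝ) ^ 2 := by
      funext i
      rw [real_inner_comm (φ i) a]; ring
    rwa [heq] at h
  have hle : (inner ℝ g g : ℝ) ≤ K ^ 2 * (inner ℝ a a : ℝ) := by
    refine hasSum_le (fun i => ?_) hg2 ha2
    have h1 := key i
    have h2 : |c i| ≤ K * |(inner ℝ a (φ i) : ℝ)| := by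
      simp only [hc]
      rw [abs_mul]
      exact mul_le_mul_of_nonneg_right (key i) (abs_nonneg _)
    calc c i ^ 2 = |c i| ^ 2 := (sq_abs _).symm
      _ ≤ (K * |(inner ℝ a (φ i) : ℝ)|) ^ 2 := by
          apply pow_le_pow_left₀ (abs_nonneg _) h2
      _ = K ^ 2 * (inner ℝ a (φ i) : ℝ) ^ 2 := by rw [mul_pow, sq_abs]
  rw [real_inner_self_eq_norm_sq, real_inner_self_eq_norm_sq] at hle
  have hgoal : ‖g‖ ≤ K * ‖a‖ := by
    have hs := Real.sqrt_le_sqrt hle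
    rwa [Real.sqrt_sq (norm_nonneg g), show K ^ 2 * ‖a‖ ^ 2 = (K * ‖a‖) ^ 2 by ring,
      Real.sqrt_sq (mul_nonneg hKpos.le (norm_nonneg a))] at hs
  calc ‖g‖ ≤ K * ‖a‖ := hgoal
    _ = C * t ^ (α * (1 - γ) - 1) * ‖a‖ := by rw [hK]
end

section
/- Under the bounds c₁/(1+λ_n T^α) ≤ E_{α,1}(-λ_n T^α) ≤ c₂/(1+λ_n T^α) (c₁,c₂ > 0, λ_n ≥ λ_1 > 0), the operator S(T)a = Σ_n E_{α,1}(-λ_n T^α)⟨a,φ_n⟩φ_n maps H bijectively onto D(A_0) = {v : Σ λ_n²|⟨v,φ_n⟩|² < ∞}; i.e., S(T) is injective and for every b ∈ D(A_0) there exists a ∈ H with S(T)a = b. -/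
open Real
open scoped ENNReal

lemma aux_tsum {H : Type*} [NormedAddCommGroup H] [InnerProductSpace ℝ H] [CompleteSpace H]
    (φ : HilbertBasis ℕ ℝ H) (f : ℕ → ℝ) (hf : Summable (fun n => f n ^ 2)) :
    ∃ x : H, (∀ n, (inner ℝ x (φ n) : ℝ) = f n) ∧ (∑' n, f n • φ n) = x := by
  have hmem : Memℓp f 2 := by
    apply memℓp_gen
    have h2 : (2 : ℝ≥0∞).toReal = 2 := by norm_num
    rw [h2]
    have : (fun i => ‖f i‖ ^ (2:ℝ)) = fun i => f i ^ 2 := by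
      funext i
      rw [show (2:ℝ) = ((2:ℕ):ℝ) by norm_num, Real.rpow_natCast, Real.norm_eq_abs, sq_abs]
    rw [this]; exact hf
  set F : lp (fun _ : ℕ => ℝ) 2 := ⟨f, hmem⟩ with hF
  refine ⟨φ.repr.symm F, ?_, ?_⟩
  · intro n
    have := φ.repr_apply_apply (φ.repr.symm F) n
    rw [LinearIsometryEquiv.apply_symm_apply] at this
    rw [real_inner_comm]
    exact this.symm
  · exact (φ.hasSum_repr_symm F).tsum_eq

lemma aux_hasSum {H : Type*} [NormedAddCommGroup H] [InnerProductSpace ℝ H] [CompleteSpace H]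
    (φ : HilbertBasis ℕ ℝ H) (x : H) :
    HasSum (fun n => (inner ℝ x (φ n) : ℝ) • φ n) x := by
  have h1 := φ.hasSum_repr x
  have : (fun i => φ.repr x i • φ i) = fun n => (inner ℝ x (φ n) : ℝ) • φ n := by
    funext n
    rw [φ.repr_apply_apply, real_inner_comm]
  rwa [this] at h1

lemma aux_inner_sq_summable {H : Type*} [NormedAddCommGroup H] [InnerProductSpace ℝ H]
    [CompleteSpace H] (φ : HilbertBasis ℕ ℝ H) (a : H) :
    Summable fun n => (inner ℝ a (φ n) : ℝ) ^ 2 :=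
  (φ.summable_inner_mul_inner a a).congr fun n => by
    rw [sq, real_inner_comm (φ n) a]

/-- The one-parameter Mittag-Leffler function `E_{α,1}` on the reals. -/
noncomputable def mittagLeffler (α : ℝ) (x : ℝ) : ℝ :=
  ∑' k : ℕ, x ^ k / Real.Gamma (α * k + 1)

/-- Under two-sided Mittag-Leffler bounds, S(T)a = Σ_n E_{α,1}(-λ_nT^α)⟨a,φ_n⟩φ_n maps
H bijectively onto D(A₀): S(T) is injective, and every b with Σλ_n²⟨b,φ_n⟩² < ∞ is hit. -/
theorem solution_operator_bijective_onto_domain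
    {H : Type*} [NormedAddCommGroup H] [InnerProductSpace ℝ H] [CompleteSpace H]
    (φ : HilbertBasis ℕ ℝ H) (lam : ℕ → ℝ)
    (hlam0 : 0 < lam 0) (hlam : ∀ n, lam 0 ≤ lam n)
    (α T c₁ c₂ : ℝ) (hα0 : 0 < α) (hα1 : α < 1) (hT : 0 < T)
    (hc₁ : 0 < c₁) (hc₂ : 0 < c₂)
    (hlow : ∀ n : ℕ, c₁ / (1 + lam n * T ^ α) ≤ mittagLeffler α (-(lam n * T ^ α)))
    (hup : ∀ n : ℕ, mittagLeffler α (-(lam n * T ^ α)) ≤ c₂ / (1 + lam n * T ^ α)) :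
    Function.Injective (fun a : H =>
      ∑' n : ℕ, (mittagLeffler α (-(lam n * T ^ α)) * (inner ℝ a (φ n) : ℝ)) • φ n) ∧
    ∀ b : H, Summable (fun n : ℕ => (lam n * (inner ℝ b (φ n) : ℝ)) ^ 2) →
      ∃ a : H,
        (∑' n : ℕ, (mittagLeffler α (-(lam n * T ^ α)) * (inner ℝ a (φ n) : ℝ)) • φ n)
          = b := by
  set μ : ℕ → ℝ := fun n => mittagLeffler α (-(lam n * T ^ α)) with hμ
  have hTα : 0 < T ^ α := Real.rpow_pos_of_pos hT α
  have hden : ∀ n, 0 < 1 + lam n * T ^ α := fun n => by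
    have := mul_pos (hlam0.trans_le (hlam n)) hTα
    linarith
  have hμpos : ∀ n, 0 < μ n := fun n =>
    lt_of_lt_of_le (div_pos hc₁ (hden n)) (hlow n)
  have hμle : ∀ n, μ n ≤ c₂ := fun n => by
    refine (hup n).trans (div_le_self hc₂.le ?_)
    have := mul_pos (hlam0.trans_le (hlam n)) hTα
    linarith
  have hScoef : ∀ a : H, Summable fun n => (μ n * (inner ℝ a (φ n) : ℝ)) ^ 2 := by
    intro a
    refine Summable.of_nonneg_of_le (fun n => sq_nonneg _) (fun n => ?_)
      (((aux_inner_sq_summable φ a)).mul_left (c₂ ^ 2))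
    rw [mul_pow]
    exact mul_le_mul_of_nonneg_right
      (pow_le_pow_left₀ (hμpos n).le (hμle n) 2) (sq_nonneg _)
  constructor
  · intro a a' h
    obtain ⟨x, hx1, hx2⟩ := aux_tsum φ (fun n => μ n * (inner ℝ a (φ n) : ℝ)) (hScoef a)
    obtain ⟨x', hx1', hx2'⟩ := aux_tsum φ (fun n => μ n * (inner ℝ a' (φ n) : ℝ)) (hScoef a')
    have hxx : x = x' := by rw [← hx2, ← hx2']; exact h
    have hcoef : ∀ n, (inner ℝ a (φ n) : ℝ) = inner ℝ a' (φ n) := by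
      intro n
      have h1 : μ n * (inner ℝ a (φ n) : ℝ) = μ n * (inner ℝ a' (φ n) : ℝ) := by
        rw [← hx1 n, ← hx1' n, hxx]
      exact mul_left_cancel₀ (hμpos n).ne' h1
    have ha := aux_hasSum φ a
    have ha' := aux_hasSum φ a'
    have : (fun n => (inner ℝ a' (φ n) : ℝ) • φ n) = fun n => (inner ℝ a (φ n) : ℝ) • φ n := by
      funext n; rw [hcoef n]
    rw [this] at ha'
    exact ha.unique ha'
  · intro b hb
    set g : ℕ → ℝ := fun n => (inner ℝ b (φ n) : ℝ) / μ n with hg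
    have hbsq := aux_inner_sq_summable φ b
    have hBsum : Summable (fun n => (1 / c₁ ^ 2) *
        (2 * (inner ℝ b (φ n) : ℝ) ^ 2 +
          2 * (T ^ α) ^ 2 * (lam n * (inner ℝ b (φ n) : ℝ)) ^ 2)) :=
      ((hbsq.mul_left 2).add (hb.mul_left (2 * (T ^ α) ^ 2))).mul_left _
    have hgsum : Summable fun n => g n ^ 2 := by
      refine Summable.of_nonneg_of_le (fun n => sq_nonneg _) (fun n => ?_) hBsum
      have h1 : (1 : ℝ) / μ n ≤ (1 + lam n * T ^ α) / c₁ := by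
        have h0 := one_div_le_one_div_of_le (div_pos hc₁ (hden n)) (hlow n)
        rwa [one_div_div] at h0
      have h1sq : (1 / μ n) ^ 2 ≤ ((1 + lam n * T ^ α) / c₁) ^ 2 :=
        pow_le_pow_left₀ (one_div_pos.mpr (hμpos n)).le h1 2
      have e1 : g n ^ 2 = (inner ℝ b (φ n) : ℝ) ^ 2 * (1 / μ n) ^ 2 := by
        rw [hg]; ring
      have step1 : g n ^ 2 ≤ (inner ℝ b (φ n) : ℝ) ^ 2 * ((1 + lam n * T ^ α) / c₁) ^ 2 := by
        rw [e1]
        exact mul_le_mul_of_nonneg_left h1sq (sq_nonneg _)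
      refine step1.trans ?_
      have e2 : (inner ℝ b (φ n) : ℝ) ^ 2 * ((1 + lam n * T ^ α) / c₁) ^ 2
          = ((1 + lam n * T ^ α) ^ 2 * (inner ℝ b (φ n) : ℝ) ^ 2) / c₁ ^ 2 := by ring
      have e3 : (1 / c₁ ^ 2) *
          (2 * (inner ℝ b (φ n) : ℝ) ^ 2 +
            2 * (T ^ α) ^ 2 * (lam n * (inner ℝ b (φ n) : ℝ)) ^ 2)
          = (2 * (inner ℝ b (φ n) : ℝ) ^ 2 +
            2 * (T ^ α) ^ 2 * (lam n * (inner ℝ b (φ n) : ℝ)) ^ 2) / c₁ ^ 2 := by ring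
      rw [e2, e3]
      gcongr
      nlinarith [sq_nonneg ((1 - lam n * T ^ α) * (inner ℝ b (φ n) : ℝ))]
    obtain ⟨a, ha1, ha2⟩ := aux_tsum φ g hgsum
    refine ⟨a, ?_⟩
    have hbsum := aux_hasSum φ b
    have hfun : (fun n => (μ n * (inner ℝ a (φ n) : ℝ)) • φ n)
        = fun n => (inner ℝ b (φ n) : ℝ) • φ n := by
      funext n
      rw [ha1 n, hg]
      congr 1
      rw [mul_comm, div_mul_cancel₀ _ (hμpos n).ne']
    calc (∑' n : ℕ, (μ n * (inner ℝ a (φ n) : ℝ)) • φ n)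
        = ∑' n : ℕ, (inner ℝ b (φ n) : ℝ) • φ n := by rw [hfun]
      _ = b := hbsum.tsum_eq
end

section
/- Let V be a finite-dimensional complex vector space, A : V → V linear with single eigenvalue μ (i.e., A = μI + D with D nilpotent), 0 < α < 1, T > 0, and suppose E_{α,1}(-μ T^α) ≠ 0. If v ∈ V and u(t) = E_{α,1}((-A)t^α)v := Σ_{k≥0} (-A)^k t^{αk}/Γ(αk+1) v satisfies u(T) = 0, then v = 0 and hence u(t) = 0 for all t ≥ 0. -/
open Real

private lemma choose_le_two_pow_aux (k j : ℕ) : k.choose j ≤ 2 ^ k := by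
  rcases le_or_gt j k with h | h
  · calc k.choose j ≤ ∑ i ∈ Finset.range (k + 1), k.choose i :=
        Finset.single_le_sum (fun i _ => Nat.zero_le _) (Finset.mem_range.2 (Nat.lt_succ_of_le h))
    _ = 2 ^ k := Nat.sum_range_choose k
  · rw [Nat.choose_eq_zero_of_lt h]; exact Nat.zero_le _

private lemma gamma_summable {α : ℝ} (hα : 0 < α) {r : ℝ} (hr : 0 ≤ r) :
    Summable (fun k : ℕ => r ^ k / Real.Gamma (α * k + 1)) := by
  set s : ℝ := 2 * (r + 1) with hs
  have hs1 : 1 ≤ s := by nlinarith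
  have hs0 : (0:ℝ) < s := by linarith
  set c : ℝ := s ^ (2 / α) with hc
  have hfac : ∀ᶠ m : ℕ in Filter.atTop, c ^ m ≤ (m.factorial : ℝ) := by
    have h0 := (FloorSemiring.tendsto_pow_div_factorial_atTop c).eventually_lt_const one_pos
    filter_upwards [h0] with m hm
    have hmpos : (0:ℝ) < (m.factorial : ℝ) := by exact_mod_cast m.factorial_pos
    calc c ^ m = c ^ m / (m.factorial : ℝ) * (m.factorial : ℝ) := by field_simp
    _ ≤ 1 * (m.factorial : ℝ) := by
        apply mul_le_mul_of_nonneg_right hm.le hmpos.le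
    _ = (m.factorial : ℝ) := one_mul _
  have hαk : Filter.Tendsto (fun k : ℕ => α * k) Filter.atTop Filter.atTop := by
    exact Filter.Tendsto.const_mul_atTop hα tendsto_natCast_atTop_atTop
  have hfloor : Filter.Tendsto (fun k : ℕ => ⌊α * (k:ℝ)⌋₊) Filter.atTop Filter.atTop :=
    tendsto_nat_floor_atTop.comp hαk
  have key : ∀ᶠ k : ℕ in Filter.atTop, s ^ k ≤ Real.Gamma (α * k + 1) := by
    filter_upwards [hfloor.eventually hfac, hαk.eventually_ge_atTop 2] with k h1 h2
    set m : ℕ := ⌊α * (k:ℝ)⌋₊ with hm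
    have hmlt : α * k - 1 < (m : ℝ) := Nat.sub_one_lt_floor _
    have hmk : (k:ℝ) ≤ 2 / α * m := by
      rw [div_mul_eq_mul_div, le_div_iff₀ hα]
      nlinarith
    have hmle : (m : ℝ) ≤ α * k := Nat.floor_le (by positivity)
    have step1 : s ^ k ≤ c ^ m := by
      rw [← Real.rpow_natCast s k, ← Real.rpow_natCast c m, hc,
        ← Real.rpow_mul hs0.le]
      exact Real.rpow_le_rpow_of_exponent_le hs1 (by linarith [hmk])
    have step2 : (m.factorial : ℝ) ≤ Real.Gamma (α * k + 1) := by
      rw [← Real.Gamma_nat_eq_factorial]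
      apply Real.Gamma_strictMonoOn_Ici.monotoneOn
      · simp only [Set.mem_Ici]
        have h2m : 2 ≤ m := Nat.le_floor (by exact_mod_cast h2)
        have : (2:ℝ) ≤ m := by exact_mod_cast h2m
        linarith
      · simp only [Set.mem_Ici]; linarith
      · linarith
    exact le_trans step1 (le_trans h1 step2)
  apply summable_of_isBigO_nat (summable_geometric_of_lt_one (by norm_num : (0:ℝ) ≤ 1/2)
    (by norm_num))
  apply Asymptotics.IsBigO.of_bound 1
  filter_upwards [key] with k hk
  have hΓ : 0 < Real.Gamma (α * k + 1) := Real.Gamma_pos_of_pos (by positivity)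
  have hsk : (0:ℝ) < s ^ k := pow_pos hs0 k
  rw [Real.norm_eq_abs, Real.norm_eq_abs, abs_of_nonneg (by positivity),
    abs_of_nonneg (by positivity), one_mul]
  calc r ^ k / Real.Gamma (α * k + 1) ≤ r ^ k / s ^ k := by
        apply div_le_div_of_nonneg_left (pow_nonneg hr k) hsk hk
  _ = (r / s) ^ k := (div_pow r s k).symm
  _ ≤ (1/2 : ℝ) ^ k := by
      apply pow_le_pow_left₀ (by positivity)
      rw [div_le_div_iff₀ hs0 (by norm_num)]
      nlinarith

/-- Backward uniqueness on a generalized eigenspace: if A = μ·I + D with D nilpotent,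
E_{α,1}(-μT^α) ≠ 0, and u(t) = E_{α,1}((-A)t^α)v satisfies u(T) = 0, then v = 0 and
u(t) = 0 for all t ≥ 0. -/
theorem backward_uniqueness_generalized_eigenspace
    {V : Type*} [NormedAddCommGroup V] [NormedSpace ℂ V] [FiniteDimensional ℂ V]
    (μ : ℂ) (D : V →L[ℂ] V) (hD : IsNilpotent D) (α T : ℝ)
    (hα0 : 0 < α) (hα1 : α < 1) (hT : 0 < T)
    (A : V →L[ℂ] V) (hA : A = μ • (1 : V →L[ℂ] V) + D)
    (hE : (∑' k : ℕ, (-(μ * ((T ^ α : ℝ) : ℂ))) ^ k / Complex.Gamma (α * k + 1)) ≠ 0)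
    (v : V)
    (u : ℝ → V)
    (hu : ∀ t : ℝ, u t =
      (∑' k : ℕ, (((t ^ (α * k) : ℝ) : ℂ) / Complex.Gamma (α * k + 1)) • (-A) ^ k) v)
    (huT : u T = 0) :
    v = 0 ∧ ∀ t : ℝ, 0 ≤ t → u t = 0 := by
  obtain ⟨n₀, hn₀⟩ := hD
  have hn : D ^ (n₀ + 1) = 0 := by rw [pow_succ, hn₀, zero_mul]
  set n : ℕ := n₀ + 1 with hndef
  have hGamma : ∀ k : ℕ, Complex.Gamma ((α : ℂ) * k + 1) = ((Real.Gamma (α * k + 1) : ℝ) : ℂ) := by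
    intro k
    rw [← Complex.Gamma_ofReal]
    push_cast
    ring_nf
  have hΓpos : ∀ k : ℕ, 0 < Real.Gamma (α * k + 1) := fun k =>
    Real.Gamma_pos_of_pos (by positivity)
  have hTα : ∀ k : ℕ, (T ^ (α * k) : ℝ) = (T ^ α) ^ k := fun k => by
    rw [Real.rpow_mul hT.le, Real.rpow_natCast]
  -- scalar coefficients
  set a : ℕ → ℂ := fun k => ((T ^ (α * k) / Real.Gamma (α * k + 1) : ℝ) : ℂ) with ha
  have haeq : ∀ k : ℕ, (((T ^ (α * k) : ℝ) : ℂ) / Complex.Gamma ((α : ℂ) * k + 1)) = a k := by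
    intro k
    rw [hGamma k, ha]
    norm_cast
  set g : ℕ → ℕ → ℂ := fun j k => a k * (k.choose j : ℂ) * (-μ) ^ (k - j) with hg
  set r : ℝ := 2 * max ‖μ‖ 1 * T ^ α with hrdef
  have hr0 : 0 ≤ r := by positivity
  have hgbound : ∀ j k, ‖g j k‖ ≤ r ^ k / Real.Gamma (α * k + 1) := by
    intro j k
    have h1 : ‖a k‖ = (T ^ α) ^ k / Real.Gamma (α * k + 1) := by
      rw [ha]
      rw [Complex.norm_real, Real.norm_eq_abs, abs_of_nonneg (by positivity), hTα k]
    have h2 : (k.choose j : ℝ) ≤ 2 ^ k := by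
      exact_mod_cast choose_le_two_pow_aux k j
    have h3 : ‖(-μ) ^ (k - j)‖ ≤ (max ‖μ‖ 1) ^ k := by
      rw [norm_pow, norm_neg]
      calc ‖μ‖ ^ (k - j) ≤ (max ‖μ‖ 1) ^ (k - j) :=
            pow_le_pow_left₀ (norm_nonneg μ) (le_max_left _ _) _
      _ ≤ (max ‖μ‖ 1) ^ k := pow_le_pow_right₀ (le_max_right _ _) (Nat.sub_le k j)
    calc ‖g j k‖ = ‖a k‖ * (k.choose j : ℝ) * ‖(-μ) ^ (k - j)‖ := by
          rw [hg]; simp [norm_mul, Complex.norm_natCast]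
    _ ≤ ((T ^ α) ^ k / Real.Gamma (α * k + 1)) * 2 ^ k * (max ‖μ‖ 1) ^ k := by
        rw [h1]
        apply mul_le_mul (mul_le_mul le_rfl h2 (by positivity) (by positivity)) h3
          (norm_nonneg _) (by positivity)
    _ = r ^ k / Real.Gamma (α * k + 1) := by
        rw [hrdef, mul_pow, mul_pow]
        ring
  have hsum : ∀ j, Summable (fun k => g j k) := by
    intro j
    apply Summable.of_norm
    exact Summable.of_nonneg_of_le (fun k => norm_nonneg _) (hgbound j)
      (gamma_summable hα0 hr0)
  -- binomial expansion of each term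
  have hDj : ∀ j : ℕ, n ≤ j → ((-D : V →L[ℂ] V)) ^ j = 0 := by
    intro j hj
    have hz : ((-D : V →L[ℂ] V)) ^ n = 0 := by rw [neg_pow, hn, mul_zero]
    rw [show j = n + (j - n) from (Nat.add_sub_cancel' hj).symm, pow_add, hz, zero_mul]
  have hFsplit : ∀ k : ℕ, a k • (-A) ^ k = ∑ j ∈ Finset.range n, g j k • (-D) ^ j := by
    intro k
    have hcomm : Commute (-D : V →L[ℂ] V) ((-μ) • (1 : V →L[ℂ] V)) :=
      (Commute.one_right (-D : V →L[ℂ] V)).smul_right (-μ)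
    have hneg : -A = -D + (-μ) • (1 : V →L[ℂ] V) := by
      rw [hA, neg_add, neg_smul]; abel
    have hbin : (-A) ^ k
        = ∑ j ∈ Finset.range (k + 1), ((k.choose j : ℂ) * (-μ) ^ (k - j)) • (-D) ^ j := by
      rw [hneg, hcomm.add_pow]
      refine Finset.sum_congr rfl fun j hj => ?_
      have hcast : ((k.choose j : ℕ) : V →L[ℂ] V) = (k.choose j : ℂ) • (1 : V →L[ℂ] V) := by
        rw [← map_natCast (algebraMap ℂ (V →L[ℂ] V)), Algebra.algebraMap_eq_smul_one]
      rw [smul_pow, one_pow, hcast]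
      simp only [mul_smul_comm, mul_one, smul_smul]
    rw [hbin, Finset.smul_sum]
    have hext : ∀ m : ℕ, ∑ j ∈ Finset.range m, g j k • ((-D : V →L[ℂ] V)) ^ j
        = ∑ j ∈ Finset.range (max n (k + 1)), g j k • ((-D)) ^ j → True := fun _ _ => trivial
    have e1 : ∑ j ∈ Finset.range (k + 1), a k • (((k.choose j : ℂ) * (-μ) ^ (k - j)) • (-D) ^ j)
        = ∑ j ∈ Finset.range (k + 1), g j k • ((-D : V →L[ℂ] V)) ^ j := by
      refine Finset.sum_congr rfl fun j _ => ?_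
      rw [smul_smul]
      simp only [hg]
      ring_nf
    rw [e1]
    have e2 : ∑ j ∈ Finset.range (k + 1), g j k • ((-D : V →L[ℂ] V)) ^ j
        = ∑ j ∈ Finset.range (max n (k + 1)), g j k • ((-D)) ^ j := by
      apply Finset.sum_subset (Finset.range_subset_range.2 (le_max_right _ _))
      intro j _ hj
      rw [Finset.mem_range, not_lt] at hj
      simp only [hg]
      rw [Nat.choose_eq_zero_of_lt (by omega)]
      simp
    have e3 : ∑ j ∈ Finset.range n, g j k • ((-D : V →L[ℂ] V)) ^ j
        = ∑ j ∈ Finset.range (max n (k + 1)), g j k • ((-D)) ^ j := by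
      apply Finset.sum_subset (Finset.range_subset_range.2 (le_max_left _ _))
      intro j _ hj
      rw [Finset.mem_range, not_lt] at hj
      rw [hDj j hj, smul_zero]
    rw [e2, ← e3]
  -- the operator at time T
  have hMT : (∑' k : ℕ, (((T ^ (α * k) : ℝ) : ℂ) / Complex.Gamma (α * k + 1)) • (-A) ^ k)
      = ∑ j ∈ Finset.range n, (∑' k, g j k) • ((-D : V →L[ℂ] V)) ^ j := by
    calc (∑' k : ℕ, (((T ^ (α * k) : ℝ) : ℂ) / Complex.Gamma (α * k + 1)) • (-A) ^ k)
        = ∑' k : ℕ, ∑ j ∈ Finset.range n, g j k • ((-D : V →L[ℂ] V)) ^ j := by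
          refine tsum_congr fun k => ?_
          rw [haeq k, hFsplit k]
    _ = ∑ j ∈ Finset.range n, ∑' k, g j k • ((-D : V →L[ℂ] V)) ^ j :=
        Summable.tsum_finsetSum fun j _ => (hsum j).smul_const _
    _ = ∑ j ∈ Finset.range n, (∑' k, g j k) • ((-D : V →L[ℂ] V)) ^ j :=
        Finset.sum_congr rfl fun j _ => Summable.tsum_smul_const (hsum j) _
  set c0 : ℂ := ∑' k, g 0 k with hc0def
  have hc0 : c0 = ∑' k : ℕ, (-(μ * ((T ^ α : ℝ) : ℂ))) ^ k / Complex.Gamma (α * k + 1) := by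
    refine tsum_congr fun k => ?_
    simp only [hg, ha]
    rw [Nat.choose_zero_right, Nat.cast_one, mul_one, Nat.sub_zero]
    rw [hGamma k, hTα k]
    push_cast
    rw [neg_pow (μ * _), mul_pow]
    field_simp
    ring
  have hc0ne : c0 ≠ 0 := by rw [hc0]; exact hE
  set N : V →L[ℂ] V := ∑ i ∈ Finset.range n₀, (∑' k, g (i + 1) k) • ((-D : V →L[ℂ] V)) ^ (i + 1)
    with hNdef
  have hMT2 : (∑' k : ℕ, (((T ^ (α * k) : ℝ) : ℂ) / Complex.Gamma (α * k + 1)) • (-A) ^ k)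
      = N + c0 • (1 : V →L[ℂ] V) := by
    rw [hMT, hndef, Finset.sum_range_succ']
    rw [pow_zero]
  -- N is nilpotent
  set Q : V →L[ℂ] V := ∑ i ∈ Finset.range n₀, (∑' k, g (i + 1) k) • ((-D : V →L[ℂ] V)) ^ i
    with hQdef
  have hNQ : N = (-D) * Q := by
    rw [hNdef, hQdef, Finset.mul_sum]
    refine Finset.sum_congr rfl fun i _ => ?_
    rw [mul_smul_comm, ← pow_succ']
  have hcommQ : Commute (-D : V →L[ℂ] V) Q := by
    refine Commute.sum_right _ _ _ fun i _ => ?_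
    exact ((Commute.refl (-D : V →L[ℂ] V)).pow_right i).smul_right _
  have hNnil : IsNilpotent N := by
    refine ⟨n, ?_⟩
    rw [hNQ, hcommQ.mul_pow, hDj n le_rfl, zero_mul]
  have hcu : IsUnit (c0 • (1 : V →L[ℂ] V)) := by
    refine ⟨⟨c0 • 1, c0⁻¹ • 1, ?_, ?_⟩, rfl⟩
    · rw [smul_mul_smul_comm, mul_one, mul_inv_cancel₀ hc0ne, one_smul]
    · rw [smul_mul_smul_comm, mul_one, inv_mul_cancel₀ hc0ne, one_smul]
  have hMunit : IsUnit
      (∑' k : ℕ, (((T ^ (α * k) : ℝ) : ℂ) / Complex.Gamma (α * k + 1)) • (-A) ^ k) := by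
    rw [hMT2]
    exact hNnil.isUnit_add_right_of_commute hcu ((Commute.one_right N).smul_right c0)
  have hMv : (∑' k : ℕ, (((T ^ (α * k) : ℝ) : ℂ) / Complex.Gamma (α * k + 1)) • (-A) ^ k) v
      = 0 := by
    rw [← hu T]; exact huT
  obtain ⟨w, hw⟩ := hMunit
  have hv0 : v = 0 := by
    have h1 : ((↑w⁻¹ : V →L[ℂ] V) * ↑w) v = v := by rw [w.inv_mul]; rfl
    rw [ContinuousLinearMap.mul_apply, hw, hMv, map_zero] at h1
    exact h1.symm
  refine ⟨hv0, fun t _ => ?_⟩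
  rw [hu t, hv0, map_zero]
end
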